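/- Let s = (s₁,s₂,s₃) ∈ ℝ³ with s₁,s₂,s₃ > 0. Then M₂₄(s, a⁰(s)) · v = 0, where v is the column vector v := ((s₂-s₃)/s₁, (s₃-s₁)/s₂, (s₁-s₂)/s₃)ᵀ. In particular, if s₁,s₂,s₃ are not all equal, then M₂₄(s, a⁰(s)) is singular. -/
import Mathlib


open Matrix

/-- `S(s) = 2(s₁s₂+s₁s₃+s₂s₃) - (s₁²+s₂²+s₃²)`. -/
noncomputable def Spoly (s : Fin 3 → ℝ) : ℝ :=
  2 * (s 0 * s 1 + s 0 * s 2 + s 1 * s 2) - (s 0 ^ 2 + s 1 ^ 2 + s 2 ^ 2)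

/-- `p_r(s) = (s_{r+1}-s_{r+2})² + 2 s_r (s_{r+1}+s_{r+2}) - 3 s_r²`, indices mod 3. -/
noncomputable def ppoly (s : Fin 3 → ℝ) (r : Fin 3) : ℝ :=
  (s (r + 1) - s (r + 2)) ^ 2 + 2 * s r * (s (r + 1) + s (r + 2)) - 3 * s r ^ 2

/-- `a_r⁰(s) = ((s_{r+1}-s_{r+2})² - s_r²)/(2 s_r)`, indices mod 3. -/
noncomputable def a0 (s : Fin 3 → ℝ) (r : Fin 3) : ℝ :=
  ((s (r + 1) - s (r + 2)) ^ 2 - s r ^ 2) / (2 * s r)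

/-- First block of the modified curvature operator of `(W²⁴, g_s)`. -/
noncomputable def M24 (s a : Fin 3 → ℝ) : Matrix (Fin 3) (Fin 3) ℝ :=
  !![4 * s 0,                   Spoly s / s 2 - 2 * a 2,  Spoly s / s 1 - 2 * a 1;
     Spoly s / s 2 - 2 * a 2,   4 * s 1,                  Spoly s / s 0 - 2 * a 0;
     Spoly s / s 1 - 2 * a 1,   Spoly s / s 0 - 2 * a 0,  4 * s 2]

/-- `M₂₄(s, a⁰(s))` annihilates `v = ((s₂-s₃)/s₁, (s₃-s₁)/s₂, (s₁-s₂)/s₃)ᵀ`; in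
particular, if `s₁, s₂, s₃` are not all equal, then `M₂₄(s, a⁰(s))` is singular. -/
theorem M24_mulVec_v_eq_zero (s : Fin 3 → ℝ) (hs : ∀ r, 0 < s r) :
    (M24 s (a0 s)).mulVec (fun r => (s (r + 1) - s (r + 2)) / s r) = 0 ∧
      (¬ (s 0 = s 1 ∧ s 1 = s 2) → (M24 s (a0 s)).det = 0) := by
  have h0 := (hs 0).ne'
  have h1 := (hs 1).ne'
  have h2 := (hs 2).ne'
  have hmv : (M24 s (a0 s)).mulVec (fun r => (s (r + 1) - s (r + 2)) / s r) = 0 := by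
    funext i
    fin_cases i <;>
    · simp [M24, a0, Spoly, Matrix.mulVec, dotProduct, Fin.sum_univ_three,
        Fin.isValue, show (0:Fin 3)+1 = 1 from rfl, show (0:Fin 3)+2 = 2 from rfl,
        show (1:Fin 3)+1 = 2 from rfl, show (1:Fin 3)+2 = 0 from rfl,
        show (2:Fin 3)+1 = 0 from rfl, show (2:Fin 3)+2 = 1 from rfl]
      field_simp
      ring
  refine ⟨hmv, fun hne => ?_⟩
  rw [← Matrix.exists_mulVec_eq_zero_iff]
  refine ⟨_, ?_, hmv⟩
  intro hv
  apply hne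
  have e2 : (s (2+1) - s (2+2)) / s 2 = 0 := congrFun hv 2
  have e0 : (s (0+1) - s (0+2)) / s 0 = 0 := congrFun hv 0
  rw [div_eq_zero_iff, sub_eq_zero] at e2 e0
  constructor
  · simpa using e2.resolve_right h2
  · simpa using e0.resolve_right h0
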